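/- arXiv:2205.12561 — 2 statements merged into one kernel-verified Lean document; each statement's English description precedes it below -/
import Mathlib

section
/- Under conditions (I)-(III) (unperturbed eigentriple (λ, h, ν) with ν(h)=1, resolvent R_λ = (R − λI)⁻¹ : D⁰ → B⁰ where R = L − λ(h⊗ν), and perturbed left eigenvector ν(ε) with L(ε)*ν(ε) = λ(ε)ν(ε), ν(ε)(h) ≠ 0), the zeroth-order remainder of κ(ε, ·) := ν(ε, ·)/ν(ε, h) satisfies: for every f ∈ D⁰, κ(ε, f) − ν(f) = κ(ε, T̃₀(ε)(Q(ε)(R_λ f))), where T̃₀(ε) := L(ε) − L and Q(ε) := h ⊗ κ(ε, ·) − I. -/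
/-! Write `f = (R − λ) g` with `g = R_λ f`. Since `ν` kills `R` and `ν(h) = 1`, `ν(f) = −λ ν(g)`.
Since `ν(ε)` is a left eigenvector of `L(ε)` and `Q(ε) g` lies in its kernel,
`ν(ε)(T̃₀(ε) Q(ε) g) = −ν(ε)(L Q(ε) g) = ν(ε)((L − λ) g)`. Both sides are therefore `κ(ε, (L − λ) g)`. -/

namespace PerturbedEigenfunctional

variable {K B : Type*} [Field K] [AddCommGroup B] [Module K B]

/-- `Q(ε)` of the paper, with `κ(ε, ·) = μ / μ h`. -/
def negProjKer (μ : B →ₗ[K] K) (h g : B) : B := (μ g / μ h) • h - g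

theorem apply_negProjKer {μ : B →ₗ[K] K} {h : B} (hμh : μ h ≠ 0) (g : B) :
    μ (negProjKer μ h g) = 0 := by
  simp [negProjKer, div_mul_cancel₀ _ hμh]

theorem apply_sub_apply_negProjKer {L L' : B →ₗ[K] B} {lam lam' : K} {μ : B →ₗ[K] K} {h : B}
    (hLh : L h = lam • h) (hμL' : ∀ f, μ (L' f) = lam' * μ f) (hμh : μ h ≠ 0) (g : B) :
    μ ((L' - L) (negProjKer μ h g)) = μ (L g) - lam * μ g := by
  have hL' : μ (L' (negProjKer μ h g)) = 0 := by rw [hμL', apply_negProjKer hμh, mul_zero]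
  rw [LinearMap.sub_apply, map_sub, hL', negProjKer]
  simp only [map_sub, map_smul, hLh, smul_eq_mul]
  field_simp
  ring

theorem apply_sub_eigen_sub_smul {L : B →ₗ[K] B} {lam : K} {ν : B →ₗ[K] K} {h : B}
    (hνL : ∀ f, ν (L f) = lam * ν f) (hνh : ν h = 1) (g : B) :
    ν (L g - lam • (ν g • h) - lam • g) = -(lam * ν g) := by
  simp only [map_sub, map_smul, hνL, hνh, smul_eq_mul]
  ring

theorem div_sub_eq_apply_sub_apply_negProjKer {L L' : B →ₗ[K] B} {lam lam' : K}
    {ν μ : B →ₗ[K] K} {h : B} (hLh : L h = lam • h) (hνL : ∀ f, ν (L f) = lam * ν f)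
    (hνh : ν h = 1) (hμL' : ∀ f, μ (L' f) = lam' * μ f) (hμh : μ h ≠ 0) (g : B) :
    μ (L g - lam • (ν g • h) - lam • g) / μ h - ν (L g - lam • (ν g • h) - lam • g) =
      μ ((L' - L) (negProjKer μ h g)) / μ h := by
  rw [apply_sub_eigen_sub_smul hνL hνh, apply_sub_apply_negProjKer hLh hμL' hμh]
  simp only [map_sub, map_smul, smul_eq_mul]
  field_simp
  ring

end PerturbedEigenfunctional

theorem stmt3_general {K B : Type*} [RCLike K] [AddCommGroup B] [Module K B]
    (L Leps : B →ₗ[K] B) (lam lamEps : K) (h : B) (nu nuEps : B →ₗ[K] K)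
    (hLh : L h = lam • h) (hnuL : ∀ f : B, nu (L f) = lam * nu f) (hnuh : nu h = 1)
    (hnuEpsL : ∀ f : B, nuEps (Leps f) = lamEps * nuEps f) (hne : nuEps h ≠ 0)
    (D : Submodule K B) (Rlam : D → B)
    (hinv : ∀ x : D, L (Rlam x) - lam • (nu (Rlam x) • h) - lam • Rlam x = (x : B)) :
    ∀ f : D, nuEps f / nuEps h - nu f =
      nuEps ((Leps - L) ((nuEps (Rlam f) / nuEps h) • h - Rlam f)) / nuEps h := by
  intro f
  rw [← hinv f]
  exact PerturbedEigenfunctional.div_sub_eq_apply_sub_apply_negProjKer hLh hnuL hnuh hnuEpsL hne (Rlam f)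

/-- Under conditions (I)-(III), for every f ∈ D⁰,
κ(ε, f) − ν(f) = κ(ε, T̃₀(ε)(Q(ε)(R_λ f))), where κ(ε,f) = ν(ε)(f)/ν(ε)(h),
T̃₀(ε) = L(ε) − L and Q(ε)f = κ(ε,f)h − f. -/
theorem stmt3 {K B : Type*} [RCLike K] [AddCommGroup B] [Module K B]
    (L Leps : B →ₗ[K] B) (lam lamEps : K) (hlam : lam ≠ 0) (h : B) (nu nuEps : B →ₗ[K] K)
    (hLh : L h = lam • h) (hnuL : ∀ f : B, nu (L f) = lam * nu f) (hnuh : nu h = 1)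
    (hnuEpsL : ∀ f : B, nuEps (Leps f) = lamEps * nuEps f) (hne : nuEps h ≠ 0)
    (D : Submodule K B) (Rlam : D → B)
    (hinv : ∀ x : D, L (Rlam x) - lam • (nu (Rlam x) • h) - lam • Rlam x = (x : B)) :
    ∀ f : D, nuEps f / nuEps h - nu f =
      nuEps ((Leps - L) ((nuEps (Rlam f) / nuEps h) • h - Rlam f)) / nuEps h :=
  stmt3_general L Leps lam lamEps h nu nuEps hLh hnuL hnuh hnuEpsL hne D Rlam hinv
end

section
/- Let B¹ ⊆ B⁰ be Banach spaces over K and L : B¹ → B⁰ linear. The following are equivalent: (a) L is weak bounded (∀η>0 ∃c(η)>0: ‖Lf‖₀ ≤ c(η)‖f‖₀ + η‖f‖₁); (b) whenever fₑ, f ∈ B¹ satisfy ‖fₑ−f‖₀ → 0 and sup_ε‖fₑ‖₁ < ∞, then ‖Lfₑ − Lf‖₀ → 0; (c) sup{‖Lf‖₀ : ‖f‖₁ ≤ 1, ‖f‖₀ ≤ δ} → 0 as δ → 0. -/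
open Filter Set

/-- Proposition on weak boundedness: for a linear map L : B¹ → B⁰ between
Banach spaces with B¹ ⊆ B⁰ (modelled by an injective linear inclusion), the following are
equivalent: (a) weak boundedness; (b) the mixed sequential continuity property for families
indexed by ε ∈ (0,1); (c) sup{‖Lf‖₀ : ‖f‖₁ ≤ 1, ‖f‖₀ ≤ δ} → 0 as δ → 0. -/
theorem stmt8 {K E F : Type*} [RCLike K]
    [NormedAddCommGroup E] [NormedSpace K E] [CompleteSpace E]
    [NormedAddCommGroup F] [NormedSpace K F] [CompleteSpace F]
    (incl : F →ₗ[K] E) (hincl : Function.Injective incl)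
    (L : F →ₗ[K] E) :
    ((∀ η : ℝ, 0 < η → ∃ c : ℝ, 0 < c ∧ ∀ f : F, ‖L f‖ ≤ c * ‖incl f‖ + η * ‖f‖) ↔
      (∀ (fe : ℝ → F) (f : F),
        Filter.Tendsto (fun ε : ℝ => ‖incl (fe ε) - incl f‖)
          (nhdsWithin 0 (Set.Ioi 0)) (nhds 0) →
        (∃ M : ℝ, ∀ ε ∈ Set.Ioo (0:ℝ) 1, ‖fe ε‖ ≤ M) →
        Filter.Tendsto (fun ε : ℝ => ‖L (fe ε) - L f‖)
          (nhdsWithin 0 (Set.Ioi 0)) (nhds 0))) ∧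
    ((∀ η : ℝ, 0 < η → ∃ c : ℝ, 0 < c ∧ ∀ f : F, ‖L f‖ ≤ c * ‖incl f‖ + η * ‖f‖) ↔
      (∀ η : ℝ, 0 < η → ∃ δ : ℝ, 0 < δ ∧
        ∀ f : F, ‖f‖ ≤ 1 → ‖incl f‖ ≤ δ → ‖L f‖ ≤ η)) := by
  have hIoo : ∀ᶠ ε in nhdsWithin (0:ℝ) (Set.Ioi 0), ε ∈ Set.Ioo (0:ℝ) 1 := by
    filter_upwards [self_mem_nhdsWithin,
      (eventually_lt_nhds zero_lt_one).filter_mono nhdsWithin_le_nhds] with ε h1 h2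
    exact ⟨h1, h2⟩
  -- (a) → (b)
  have hab : (∀ η : ℝ, 0 < η → ∃ c : ℝ, 0 < c ∧ ∀ f : F, ‖L f‖ ≤ c * ‖incl f‖ + η * ‖f‖) →
      (∀ (fe : ℝ → F) (f : F),
        Filter.Tendsto (fun ε : ℝ => ‖incl (fe ε) - incl f‖)
          (nhdsWithin 0 (Set.Ioi 0)) (nhds 0) →
        (∃ M : ℝ, ∀ ε ∈ Set.Ioo (0:ℝ) 1, ‖fe ε‖ ≤ M) →
        Filter.Tendsto (fun ε : ℝ => ‖L (fe ε) - L f‖)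
          (nhdsWithin 0 (Set.Ioi 0)) (nhds 0)) := by
    intro ha fe f htend ⟨M, hM⟩
    rw [Metric.tendsto_nhds]
    intro η' hη'
    set M' : ℝ := M + ‖f‖ + 1 with hM'
    have hM'pos : 0 < M' := by
      have := hM (1/2) (by norm_num)
      have := norm_nonneg (fe (1/2))
      have := norm_nonneg f
      simp only [hM']; linarith
    obtain ⟨c, hc, hb⟩ := ha (η' / (2 * M')) (by positivity)
    rw [Metric.tendsto_nhds] at htend
    filter_upwards [htend (η' / (2 * c)) (by positivity), hIoo] with ε h1 h2
    have key : ‖L (fe ε) - L f‖ ≤ c * ‖incl (fe ε) - incl f‖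
        + (η' / (2 * M')) * ‖fe ε - f‖ := by
      have := hb (fe ε - f)
      simpa [map_sub] using this
    have h1' : ‖incl (fe ε) - incl f‖ < η' / (2 * c) := by
      have := h1
      rw [Real.dist_eq, sub_zero, abs_of_nonneg (norm_nonneg _)] at this
      exact this
    have hbd : ‖fe ε - f‖ ≤ M' := by
      have := hM ε h2
      have h3 := norm_sub_le (fe ε) f
      simp only [hM']; linarith
    rw [Real.dist_eq, sub_zero, abs_of_nonneg (norm_nonneg _)]
    have e1 : c * ‖incl (fe ε) - incl f‖ < c * (η' / (2 * c)) := by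
      exact mul_lt_mul_of_pos_left h1' hc
    have e2 : (η' / (2 * M')) * ‖fe ε - f‖ ≤ (η' / (2 * M')) * M' := by
      exact mul_le_mul_of_nonneg_left hbd (by positivity)
    have e3 : c * (η' / (2 * c)) = η' / 2 := by field_simp
    have e4 : (η' / (2 * M')) * M' = η' / 2 := by field_simp
    linarith
  -- (b) → (a)
  have hba : (∀ (fe : ℝ → F) (f : F),
        Filter.Tendsto (fun ε : ℝ => ‖incl (fe ε) - incl f‖)
          (nhdsWithin 0 (Set.Ioi 0)) (nhds 0) →
        (∃ M : ℝ, ∀ ε ∈ Set.Ioo (0:ℝ) 1, ‖fe ε‖ ≤ M) →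
        Filter.Tendsto (fun ε : ℝ => ‖L (fe ε) - L f‖)
          (nhdsWithin 0 (Set.Ioi 0)) (nhds 0)) →
      (∀ η : ℝ, 0 < η → ∃ c : ℝ, 0 < c ∧ ∀ f : F, ‖L f‖ ≤ c * ‖incl f‖ + η * ‖f‖) := by
    intro hb
    by_contra hA
    push_neg at hA
    obtain ⟨η, hη, hA⟩ := hA
    have hsel : ∀ ε : ℝ, ∃ u : F,
        ε ∈ Set.Ioo (0:ℝ) 1 → ‖u‖ ≤ η⁻¹ ∧ ‖incl u‖ ≤ ε ∧ ‖L u‖ = 1 := by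
      intro ε
      by_cases hε : ε ∈ Set.Ioo (0:ℝ) 1
      · obtain ⟨g, hg⟩ := hA ε⁻¹ (inv_pos.mpr hε.1)
        have hLg : 0 < ‖L g‖ := by
          have h1 := mul_nonneg (inv_pos.mpr hε.1).le (norm_nonneg (incl g))
          have h2 := mul_nonneg hη.le (norm_nonneg g)
          linarith
        refine ⟨((‖L g‖⁻¹ : ℝ) : K) • g, fun _ => ?_⟩
        have hnsmul : ∀ v : E, ‖((‖L g‖⁻¹ : ℝ) : K) • v‖ = ‖L g‖⁻¹ * ‖v‖ := by
          intro v
          rw [norm_smul, RCLike.norm_ofReal, abs_of_pos (inv_pos.mpr hLg)]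
        have hnsmulF : ∀ v : F, ‖((‖L g‖⁻¹ : ℝ) : K) • v‖ = ‖L g‖⁻¹ * ‖v‖ := by
          intro v
          rw [norm_smul, RCLike.norm_ofReal, abs_of_pos (inv_pos.mpr hLg)]
        refine ⟨?_, ?_, ?_⟩
        · rw [hnsmulF, inv_mul_le_iff₀ hLg, mul_comm, inv_mul_eq_div,
            le_div_iff₀ hη]
          have h1 : 0 ≤ ε⁻¹ * ‖incl g‖ :=
            mul_nonneg (inv_pos.mpr hε.1).le (norm_nonneg _)
          nlinarith
        · rw [map_smul, hnsmul, inv_mul_le_iff₀ hLg]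
          have h4 : ε⁻¹ * ‖incl g‖ ≤ ‖L g‖ := by nlinarith [norm_nonneg g]
          have h5 := mul_le_mul_of_nonneg_left h4 hε.1.le
          calc ‖incl g‖ = ε * (ε⁻¹ * ‖incl g‖) := by
                rw [← mul_assoc, mul_inv_cancel₀ (ne_of_gt hε.1), one_mul]
            _ ≤ ε * ‖L g‖ := h5
            _ = ‖L g‖ * ε := mul_comm _ _
        · rw [map_smul, hnsmul, inv_mul_cancel₀ (ne_of_gt hLg)]
      · exact ⟨0, fun h => absurd h hε⟩
    choose fe hfe using hsel
    have hres := hb fe 0 ?_ ⟨η⁻¹, fun ε hε => (hfe ε hε).1⟩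
    · rw [Metric.tendsto_nhds] at hres
      obtain ⟨ε, h1, h2⟩ := ((hres (1/2) (by norm_num)).and hIoo).exists
      have h3 := (hfe ε h2).2.2
      rw [Real.dist_eq, sub_zero, map_zero, sub_zero,
        abs_of_nonneg (norm_nonneg _), h3] at h1
      norm_num at h1
    · apply squeeze_zero' ?_ ?_ (tendsto_id.mono_left nhdsWithin_le_nhds)
      · filter_upwards with ε using norm_nonneg _
      · filter_upwards [hIoo] with ε hε
        have := (hfe ε hε).2.1
        simpa [map_zero]
  -- (a) → (c)
  have hac : (∀ η : ℝ, 0 < η → ∃ c : ℝ, 0 < c ∧ ∀ f : F, ‖L f‖ ≤ c * ‖incl f‖ + η * ‖f‖) →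
      (∀ η : ℝ, 0 < η → ∃ δ : ℝ, 0 < δ ∧
        ∀ f : F, ‖f‖ ≤ 1 → ‖incl f‖ ≤ δ → ‖L f‖ ≤ η) := by
    intro ha η hη
    obtain ⟨c, hc, hbnd⟩ := ha (η / 2) (by positivity)
    refine ⟨η / (2 * c), by positivity, fun f hf1 hf0 => ?_⟩
    have h1 := hbnd f
    have e1 : c * ‖incl f‖ ≤ c * (η / (2 * c)) := mul_le_mul_of_nonneg_left hf0 hc.le
    have e2 : (η / 2) * ‖f‖ ≤ (η / 2) * 1 := mul_le_mul_of_nonneg_left hf1 (by positivity)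
    have e3 : c * (η / (2 * c)) = η / 2 := by field_simp
    linarith
  -- (c) → (a)
  have hca : (∀ η : ℝ, 0 < η → ∃ δ : ℝ, 0 < δ ∧
        ∀ f : F, ‖f‖ ≤ 1 → ‖incl f‖ ≤ δ → ‖L f‖ ≤ η) →
      (∀ η : ℝ, 0 < η → ∃ c : ℝ, 0 < c ∧ ∀ f : F, ‖L f‖ ≤ c * ‖incl f‖ + η * ‖f‖) := by
    intro hc η hη
    obtain ⟨δ, hδ, hbnd⟩ := hc η hη
    refine ⟨η / δ, by positivity, fun f => ?_⟩
    by_cases hf : f = 0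
    · simp [hf]
    · set m : ℝ := max ‖f‖ (‖incl f‖ / δ) with hm
      have hm0 : 0 < m := lt_max_of_lt_left (norm_pos_iff.mpr hf)
      set g : F := ((m⁻¹ : ℝ) : K) • f with hgdef
      have hnsmulF : ∀ v : F, ‖((m⁻¹ : ℝ) : K) • v‖ = m⁻¹ * ‖v‖ := by
        intro v
        rw [norm_smul, RCLike.norm_ofReal, abs_of_pos (inv_pos.mpr hm0)]
      have hnsmul : ∀ v : E, ‖((m⁻¹ : ℝ) : K) • v‖ = m⁻¹ * ‖v‖ := by
        intro v
        rw [norm_smul, RCLike.norm_ofReal, abs_of_pos (inv_pos.mpr hm0)]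
      have hg1 : ‖g‖ ≤ 1 := by
        rw [hgdef, hnsmulF, inv_mul_le_iff₀ hm0, mul_one]
        exact le_max_left _ _
      have hg0 : ‖incl g‖ ≤ δ := by
        rw [hgdef, map_smul, hnsmul, inv_mul_le_iff₀ hm0]
        have := le_max_right ‖f‖ (‖incl f‖ / δ)
        rw [div_le_iff₀ hδ] at this
        linarith [this]
      have hLg : ‖L g‖ ≤ η := hbnd g hg1 hg0
      have hLgval : ‖L g‖ = m⁻¹ * ‖L f‖ := by
        rw [hgdef, map_smul, hnsmul]
      have hLf : ‖L f‖ ≤ η * m := by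
        rw [hLgval, inv_mul_le_iff₀ hm0, mul_comm] at hLg
        linarith
      have hmle : m ≤ ‖f‖ + ‖incl f‖ / δ :=
        max_le (le_add_of_nonneg_right (by positivity))
          (le_add_of_nonneg_left (norm_nonneg f))
      have : η * m ≤ η * (‖f‖ + ‖incl f‖ / δ) := mul_le_mul_of_nonneg_left hmle hη.le
      have e : η * (‖f‖ + ‖incl f‖ / δ) = η / δ * ‖incl f‖ + η * ‖f‖ := by ring
      linarith
  exact ⟨⟨hab, hba⟩, ⟨hac, hca⟩⟩
end
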